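/- arXiv:2501.19371 — 6 statements merged into one kernel-verified Lean document; each statement's English description precedes it below -/
import Mathlib

section
/- Let D > 1 be squarefree, F = Q(√D), and let (L, Q) be a classical totally positive definite quadratic O_F-lattice with associated bilinear form B. If v, w ∈ L satisfy Q(v)·Q(w) ≺ Δ_D/4 (i.e., the inequality holds in both real embeddings), then B(v,w) is a rational integer. -/
lemma aux_cs (a b c : ℝ) (ha : 0 < a)
    (h : ∀ q : ℚ, 0 ≤ a * (q:ℝ)^2 + 2*b*(q:ℝ) + c) : b^2 ≤ a*c := by
  have hall : ∀ t : ℝ, 0 ≤ a*t^2 + 2*b*t + c := by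
    have hc : IsClosed {t : ℝ | 0 ≤ a*t^2 + 2*b*t + c} :=
      isClosed_le continuous_const (by continuity)
    have hs : Set.range ((↑) : ℚ → ℝ) ⊆ {t : ℝ | 0 ≤ a*t^2 + 2*b*t + c} := by
      rintro _ ⟨q, rfl⟩; exact h q
    have hcl := closure_minimal hs hc
    intro t
    exact hcl (Rat.denseRange_cast t)
  have h2 := hall (-b/a)
  have hne : a ≠ 0 := ha.ne'
  have e : a * (-b/a)^2 + 2*b*(-b/a) + c = c - b^2/a := by
    field_simp
    ring
  rw [e] at h2
  have h3 : b^2/a ≤ c := by linarith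
  have := (div_le_iff₀ ha).mp h3
  linarith [this]

lemma aux_cs_int (qv qw bb : ℝ) (hqv : 0 < qv)
    (hq : ∀ n m : ℤ, 0 ≤ (n:ℝ)^2*qv + 2*(n:ℝ)*(m:ℝ)*bb + (m:ℝ)^2*qw) :
    bb^2 ≤ qv*qw := by
  have h := aux_cs qv bb qw hqv ?_
  · linarith
  intro q
  have h := hq q.num (q.den : ℤ)
  have hd : (0:ℝ) < (q.den:ℝ) := by exact_mod_cast q.pos
  have e : (q:ℝ) = (q.num:ℝ)/(q.den:ℝ) := by rw [Rat.cast_def]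
  rw [e]
  have key : qv*((q.num:ℝ)/(q.den:ℝ))^2 + 2*bb*((q.num:ℝ)/(q.den:ℝ)) + qw
      = ((q.num:ℝ)^2*qv + 2*(q.num:ℝ)*(q.den:ℝ)*bb + (q.den:ℝ)^2*qw)/(q.den:ℝ)^2 := by
    field_simp
  rw [key]
  apply div_nonneg _ (sq_nonneg _)
  push_cast at h ⊢
  linarith

/-- The discriminant of `ℚ(√D)`. -/
noncomputable def quadDisc (D : ℤ) : ℝ := if D % 4 = 1 then (D : ℝ) else 4 * (D : ℝ)

/-- The standard generator `ω_D` of the ring of integers of `ℚ(√D)`. -/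
noncomputable def quadOmega (D : ℤ) : ℝ :=
  if D % 4 = 1 then (1 + Real.sqrt D) / 2 else Real.sqrt D

/-- The Galois conjugate `ω_D'`. -/
noncomputable def quadOmegaConj (D : ℤ) : ℝ :=
  if D % 4 = 1 then (1 - Real.sqrt D) / 2 else -Real.sqrt D

/-- Membership in (the image under the pair of real embeddings of) the ring of
integers `O_F = ℤ[ω_D]` of `F = ℚ(√D)`: an element of `F` is recorded as the pair of
its two real embeddings. -/
def inRingOfIntegers (D : ℤ) (x : ℝ × ℝ) : Prop :=
  ∃ a b : ℤ, x.1 = (a : ℝ) + (b : ℝ) * quadOmega D ∧ x.2 = (a : ℝ) + (b : ℝ) * quadOmegaConj D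

/-- Let `(L, Q)` be a classical totally positive definite quadratic `O_F`-lattice over
`F = ℚ(√D)` (elements of `F` represented by their pair of real embeddings).  If
`Q(v)·Q(w) ≺ Δ_D/4` in both embeddings, then `B(v,w)` is a rational integer. -/
theorem stmt2 (D : ℤ) (hD : 1 < D) (hsf : Squarefree D)
    (L : Type) [AddCommGroup L]
    (Q : L → ℝ × ℝ) (B : L → L → ℝ × ℝ)
    -- B is the bilinear form associated to the quadratic map Q
    (hBdef : ∀ v w : L, B v w = (((Q (v + w)).1 - (Q v).1 - (Q w).1) / 2,
                                 ((Q (v + w)).2 - (Q v).2 - (Q w).2) / 2))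
    (hBadd : ∀ u v w : L, B (u + v) w = B u w + B v w)
    (hBsymm : ∀ v w : L, B v w = B w v)
    (hQsc : ∀ (n : ℤ) (v : L), Q (n • v) = ((n : ℝ) ^ 2) • Q v)
    -- Q takes values in O_F
    (hQint : ∀ v : L, inRingOfIntegers D (Q v))
    -- the lattice is classical: B takes values in O_F
    (hclassical : ∀ v w : L, inRingOfIntegers D (B v w))
    -- total positive definiteness
    (hpos : ∀ v : L, v ≠ 0 → 0 < (Q v).1 ∧ 0 < (Q v).2)
    (v w : L)
    (h1 : (Q v).1 * (Q w).1 < quadDisc D / 4)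
    (h2 : (Q v).2 * (Q w).2 < quadDisc D / 4) :
    ∃ n : ℤ, B v w = ((n : ℝ), (n : ℝ)) := by
  classical
  -- basic facts
  have hB0 : ∀ u : L, B 0 u = 0 := by
    intro u
    have h := hBadd 0 0 u
    rw [add_zero] at h
    exact (left_eq_add.mp h)
  have hBz1 : ∀ (n : ℤ) (x y : L), B (n • x) y = n • B x y := by
    intro n x y
    exact map_zsmul (AddMonoidHom.mk' (fun u => B u y) (fun a b => hBadd a b y)) n x
  have hBz2 : ∀ (n : ℤ) (x y : L), B x (n • y) = n • B x y := by
    intro n x y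
    rw [hBsymm, hBz1, hBsymm]
  have hQ0 : Q 0 = 0 := by
    have := hQsc 0 v
    simpa using this
  have hQnn : ∀ u : L, 0 ≤ (Q u).1 ∧ 0 ≤ (Q u).2 := by
    intro u
    by_cases hu : u = 0
    · subst hu; rw [hQ0]; simp
    · exact ⟨(hpos u hu).1.le, (hpos u hu).2.le⟩
  by_cases hv : v = 0
  · exact ⟨0, by subst hv; rw [hB0]; simp [Prod.ext_iff]⟩
  by_cases hw : w = 0
  · refine ⟨0, ?_⟩
    rw [hBsymm]
    subst hw
    rw [hB0]
    simp [Prod.ext_iff]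
  have hQv := hpos v hv
  have hQw := hpos w hw
  -- expansion of Q (n•v + m•w)
  have hexp : ∀ n m : ℤ,
      (Q (n • v + m • w)).1 = (n:ℝ)^2*(Q v).1 + 2*(n:ℝ)*(m:ℝ)*(B v w).1 + (m:ℝ)^2*(Q w).1
      ∧ (Q (n • v + m • w)).2 = (n:ℝ)^2*(Q v).2 + 2*(n:ℝ)*(m:ℝ)*(B v w).2 + (m:ℝ)^2*(Q w).2 := by
    intro n m
    have hB := hBdef (n • v) (m • w)
    have hBnm : B (n • v) (m • w) = (n * m) • B v w := by
      rw [hBz1, hBz2, smul_smul]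
    have hb1 : (B (n • v) (m • w)).1 = (n:ℝ)*(m:ℝ)*(B v w).1 := by
      rw [hBnm, Prod.smul_fst, zsmul_eq_mul]
      push_cast
      ring
    have hb2 : (B (n • v) (m • w)).2 = (n:ℝ)*(m:ℝ)*(B v w).2 := by
      rw [hBnm, Prod.smul_snd, zsmul_eq_mul]
      push_cast
      ring
    have hq1 : (Q (n • v)).1 = (n:ℝ)^2 * (Q v).1 := by rw [hQsc]; simp [Prod.smul_fst]
    have hq2 : (Q (n • v)).2 = (n:ℝ)^2 * (Q v).2 := by rw [hQsc]; simp [Prod.smul_snd]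
    have hq3 : (Q (m • w)).1 = (m:ℝ)^2 * (Q w).1 := by rw [hQsc]; simp [Prod.smul_fst]
    have hq4 : (Q (m • w)).2 = (m:ℝ)^2 * (Q w).2 := by rw [hQsc]; simp [Prod.smul_snd]
    have e1 := congrArg Prod.fst hB
    have e2 := congrArg Prod.snd hB
    simp only at e1 e2
    constructor
    · rw [hb1, hq1, hq3] at e1; linarith
    · rw [hb2, hq2, hq4] at e2; linarith
  -- Cauchy–Schwarz in each component
  have hcs1 : (B v w).1^2 ≤ (Q v).1 * (Q w).1 := by
    apply aux_cs_int _ _ _ hQv.1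
    intro n m
    rw [← (hexp n m).1]
    exact (hQnn _).1
  have hcs2 : (B v w).2^2 ≤ (Q v).2 * (Q w).2 := by
    apply aux_cs_int _ _ _ hQv.2
    intro n m
    rw [← (hexp n m).2]
    exact (hQnn _).2
  have hb1 : (B v w).1^2 < quadDisc D / 4 := lt_of_le_of_lt hcs1 h1
  have hb2 : (B v w).2^2 < quadDisc D / 4 := lt_of_le_of_lt hcs2 h2
  -- integrality
  obtain ⟨a, b, e1, e2⟩ := hclassical v w
  have hDpos : (0:ℝ) < (D:ℝ) := by exact_mod_cast lt_trans one_pos hD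
  have hS : Real.sqrt D ^ 2 = (D:ℝ) := Real.sq_sqrt hDpos.le
  -- (B₁ - B₂)² < Δ
  have hdiff : ((B v w).1 - (B v w).2)^2 < quadDisc D := by
    nlinarith [sq_nonneg ((B v w).1 + (B v w).2)]
  -- (B₁ - B₂)² = b² Δ
  have hdeq : ((B v w).1 - (B v w).2)^2 = (b:ℝ)^2 * quadDisc D := by
    rw [e1, e2]
    rcases eq_or_ne (D % 4) 1 with h4 | h4
    · simp only [quadDisc, quadOmega, quadOmegaConj, if_pos h4]
      have e : (a:ℝ) + (b:ℝ)*((1+Real.sqrt D)/2) - ((a:ℝ) + (b:ℝ)*((1-Real.sqrt D)/2))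
          = (b:ℝ) * Real.sqrt D := by ring
      rw [e, mul_pow, hS]
    · simp only [quadDisc, quadOmega, quadOmegaConj, if_neg h4]
      have e : (a:ℝ) + (b:ℝ)*(Real.sqrt D) - ((a:ℝ) + (b:ℝ)*(-Real.sqrt D))
          = 2 * ((b:ℝ) * Real.sqrt D) := by ring
      rw [e, mul_pow, mul_pow, hS]
      ring
  have hΔpos : 0 < quadDisc D := by
    unfold quadDisc
    split <;> linarith [hDpos]
  have hb2lt : (b:ℝ)^2 < 1 := by
    have : (b:ℝ)^2 * quadDisc D < 1 * quadDisc D := by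
      rw [← hdeq, one_mul]; exact hdiff
    exact lt_of_mul_lt_mul_right this hΔpos.le
  have hbz : b = 0 := by
    have hb2i : b^2 < 1 := by exact_mod_cast hb2lt
    nlinarith [sq_nonneg b]
  subst hbz
  refine ⟨a, ?_⟩
  have : B v w = ((B v w).1, (B v w).2) := rfl
  rw [this, e1, e2]
  norm_num
end

section
/- Let (V, Q) be a positive definite quadratic space over ℚ and let x₁, x₂ ∈ V be linearly independent with integer Gram matrix G = (B(x_i, x_j)). If det G is a perfect square, then every nonzero vector x in the span ℚx₁ + ℚx₂ satisfies ν₃(Q(x)) ≡ ν₃(Q(x₁)) (mod 2); consequently, 3·Q(x₁) is not represented by ℚx₁ + ℚx₂. -/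
/-!
Write `α = Q(x₁)`, `β = B(x₁, x₂)`, `γ = Q(x₂)`. Completing the square gives
`α · Q(a x₁ + b x₂) = (a α + b β)² + (α γ - β²) b²`, and `α γ - β² = det G` is a square, so
`α · Q(x)` is a sum of two rational squares. A prime `p ≡ 3 (mod 4)`, such as `3`, divides a sum
of two squares to an even power, hence `ν₃(Q(x)) ≡ ν₃(α) (mod 2)`; a vector with `Q(x) = 3α`
would break this parity.
-/

open QuadraticMap

theorem Nat.even_padicValNat_sq_add_sq {p : ℕ} [Fact p.Prime] (hp : p % 4 = 3) (x y : ℕ) :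
    Even (padicValNat p (x ^ 2 + y ^ 2)) := by
  by_cases hmem : p ∈ (x ^ 2 + y ^ 2).primeFactors
  · exact Nat.eq_sq_add_sq_iff.mp ⟨x, y, rfl⟩ p hmem hp
  · rw [← Nat.factorization_def _ Fact.out, Finsupp.notMem_support_iff.mp hmem]
    exact Even.zero

theorem even_padicValRat_sq_add_sq {p : ℕ} [Fact p.Prime] (hp : p % 4 = 3) (u v : ℚ) :
    Even (padicValRat p (u ^ 2 + v ^ 2)) := by
  rcases eq_or_ne (u ^ 2 + v ^ 2) 0 with h | h
  · simp [h]
  set d : ℕ := u.den * v.den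
  have hclear : (u ^ 2 + v ^ 2) * (d : ℚ) ^ 2 =
      (((u.num * v.den).natAbs ^ 2 + (v.num * u.den).natAbs ^ 2 : ℕ) : ℚ) := by
    push_cast [Nat.cast_natAbs, sq_abs, ← Rat.mul_den_eq_num, d]
    ring
  obtain ⟨k, hk⟩ := Nat.even_padicValNat_sq_add_sq hp (u.num * v.den).natAbs (v.num * u.den).natAbs
  have hval := congrArg (padicValRat p) hclear
  rw [padicValRat.mul h (by positivity), padicValRat.pow, padicValRat.of_nat (n := _ + _), hk]
    at hval
  exact ⟨k - padicValRat p d, by omega⟩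

theorem QuadraticMap.map_smul_add_smul {R M N : Type*} [CommRing R] [AddCommGroup M]
    [AddCommGroup N] [Module R M] [Module R N] (Q : QuadraticMap R M N) (a b : R) (x y : M) :
    Q (a • x + b • y) = (a * a) • Q x + (a * b) • polar Q x y + (b * b) • Q y := by
  rw [QuadraticMap.map_add (⇑Q), QuadraticMap.map_smul, QuadraticMap.map_smul, polar_smul_left,
    polar_smul_right, smul_smul]
  abel

theorem padicValRat_map_smul_add_smul_emod_two_eq {V : Type*} [AddCommGroup V] [Module ℚ V]
    {p : ℕ} [Fact p.Prime] (hp : p % 4 = 3) (Q : QuadraticForm ℚ V) {x y : V} {r : ℚ}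
    (hdisc : Q x * Q y - (polar Q x y / 2) ^ 2 = r ^ 2) (hx : Q x ≠ 0) {a b : ℚ}
    (hv : Q (a • x + b • y) ≠ 0) :
    padicValRat p (Q (a • x + b • y)) % 2 = padicValRat p (Q x) % 2 := by
  have hsum : Q x * Q (a • x + b • y) = (a * Q x + b * (polar Q x y / 2)) ^ 2 + (r * b) ^ 2 := by
    rw [map_smul_add_smul]
    simp only [smul_eq_mul]
    linear_combination b ^ 2 * hdisc
  obtain ⟨k, hk⟩ := even_padicValRat_sq_add_sq hp (a * Q x + b * (polar Q x y / 2)) (r * b)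
  rw [← hsum, padicValRat.mul hx hv] at hk
  omega

/-- Let `(V, Q)` be a positive definite quadratic space over `ℚ` and `x₁, x₂ ∈ V`
linearly independent with integer Gram matrix `G`.  If `det G` is a perfect square,
then every nonzero vector of `ℚx₁ + ℚx₂` has `ν₃(Q(x))` of the same parity as
`ν₃(Q(x₁))`; consequently `3·Q(x₁)` is not represented by `ℚx₁ + ℚx₂`. -/
theorem stmt9 (V : Type) [AddCommGroup V] [Module ℚ V] (Q : QuadraticForm ℚ V)
    (hpos : ∀ x : V, x ≠ 0 → 0 < Q x)
    (x₁ x₂ : V) (hli : LinearIndependent ℚ ![x₁, x₂])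
    (G : Matrix (Fin 2) (Fin 2) ℤ)
    (hG : ∀ i j, (G i j : ℚ) = QuadraticMap.polar (⇑Q) (![x₁, x₂] i) (![x₁, x₂] j) / 2)
    (hsq : IsSquare G.det) :
    (∀ a b : ℚ, a • x₁ + b • x₂ ≠ 0 →
      padicValRat 3 (Q (a • x₁ + b • x₂)) % 2 = padicValRat 3 (Q x₁) % 2) ∧
    ¬ ∃ a b : ℚ, Q (a • x₁ + b • x₂) = 3 * Q x₁ := by
  have hQx₁ : 0 < Q x₁ := hpos x₁ (by simpa using hli.ne_zero 0)
  obtain ⟨r, hr⟩ := hsq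
  have hdisc : Q x₁ * Q x₂ - (polar Q x₁ x₂ / 2) ^ 2 = (r : ℚ) ^ 2 := by
    have hdet := congrArg (Int.cast : ℤ → ℚ) hr
    push_cast [Matrix.det_fin_two, hG] at hdet
    simp only [polar_self, polar_comm Q x₂ x₁] at hdet
    linear_combination hdet
  have parity : ∀ a b : ℚ, a • x₁ + b • x₂ ≠ 0 →
      padicValRat 3 (Q (a • x₁ + b • x₂)) % 2 = padicValRat 3 (Q x₁) % 2 := fun a b hne =>
    padicValRat_map_smul_add_smul_emod_two_eq (by norm_num) Q hdisc hQx₁.ne' (hpos _ hne).ne'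
  refine ⟨parity, fun ⟨a, b, h3⟩ => ?_⟩
  have hne : a • x₁ + b • x₂ ≠ 0 := fun h0 => by
    rw [h0, QuadraticMap.map_zero] at h3
    linarith
  have h := parity a b hne
  have hval_three : padicValRat 3 3 = 1 := by exact_mod_cast padicValRat.self (p := 3) (by norm_num)
  rw [h3, padicValRat.mul three_ne_zero hQx₁.ne', hval_three] at h
  omega
end

section
/- Let (V, Q) be a positive definite quadratic space over ℚ and x₁, x₂ ∈ V linearly independent with integer Gram matrix G. If ν₂(det G) is odd, then 5·Q(x₁) is not represented by ℚx₁ + ℚx₂. -/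
/-!
Completing the square, `Q x₁ · Q(a x₁ + b x₂) = (a Q x₁ + b B(x₁,x₂))² + det G · b²`, turns a
representation of `5 Q x₁` into a nontrivial rational solution of `X² + det G · Y² = 5 Z²`.
If `ν₂(det G) = 2k + 1`, absorbing `2ᵏ` into `Y` leaves `X² + 2c Y² = 5 Z²` with `c` odd, and
an integer solution of that equation is even in every coordinate (check modulo 8), so infinite
descent forces `Z = 0`.
-/

lemma Int.even_of_sq_add_two_mul_odd_mul_sq_eq_five_mul_sq {c U V M : ℤ} (hc : Odd c)
    (h : U ^ 2 + 2 * c * V ^ 2 = 5 * M ^ 2) : Even U ∧ Even V ∧ Even M := by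
  obtain ⟨w, rfl⟩ := hc
  have mod_eight : ∀ u v m w : ZMod 8, u ^ 2 + 2 * (2 * w + 1) * v ^ 2 = 5 * m ^ 2 →
      ZMod.castHom (by norm_num : 2 ∣ 8) (ZMod 2) u = 0 ∧
      ZMod.castHom (by norm_num : 2 ∣ 8) (ZMod 2) v = 0 ∧
      ZMod.castHom (by norm_num : 2 ∣ 8) (ZMod 2) m = 0 := by
    decide
  have h8 := mod_eight U V M w (by exact_mod_cast congrArg (Int.cast : ℤ → ZMod 8) h)
  simp only [map_intCast, ZMod.intCast_zmod_eq_zero_iff_dvd] at h8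
  exact ⟨even_iff_two_dvd.mpr h8.1, even_iff_two_dvd.mpr h8.2.1, even_iff_two_dvd.mpr h8.2.2⟩

lemma Int.eq_zero_of_sq_add_two_mul_odd_mul_sq_eq_five_mul_sq {c U V M : ℤ} (hc : Odd c)
    (h : U ^ 2 + 2 * c * V ^ 2 = 5 * M ^ 2) : M = 0 := by
  induction hn : M.natAbs using Nat.strong_induction_on generalizing U V M with
  | _ n ih =>
    obtain ⟨⟨U₀, rfl⟩, ⟨V₀, rfl⟩, ⟨M₀, rfl⟩⟩ :=
      even_of_sq_add_two_mul_odd_mul_sq_eq_five_mul_sq hc h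
    have h₀ : U₀ ^ 2 + 2 * c * V₀ ^ 2 = 5 * M₀ ^ 2 := by linarith
    by_contra hM
    have : M₀ = 0 := ih M₀.natAbs (by omega) h₀ rfl
    omega

lemma Int.exists_eq_two_pow_padicValInt_mul_odd {D : ℤ} (hD : D ≠ 0) :
    ∃ c, Odd c ∧ D = 2 ^ padicValInt 2 D * c := by
  obtain ⟨c, hc⟩ := padicValInt_dvd (p := 2) D
  refine ⟨c, Int.not_even_iff_odd.mp ?_, by exact_mod_cast hc⟩
  rintro ⟨c', hc'⟩
  have h : ((2 : ℕ) : ℤ) ^ (padicValInt 2 D + 1) ∣ D := ⟨c', by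
    push_cast at hc ⊢
    linear_combination hc + 2 ^ padicValInt 2 D * hc'⟩
  rw [padicValInt_dvd_iff] at h
  omega

lemma Int.eq_zero_of_sq_add_mul_sq_eq_five_mul_sq {D U V M : ℤ} (hD : Odd (padicValInt 2 D))
    (h : U ^ 2 + D * V ^ 2 = 5 * M ^ 2) : M = 0 := by
  have hD₀ : D ≠ 0 := by rintro rfl; simp at hD
  obtain ⟨c, hc, hDc⟩ := exists_eq_two_pow_padicValInt_mul_odd hD₀
  obtain ⟨k, hk⟩ := hD
  rw [hDc, hk] at h
  exact eq_zero_of_sq_add_two_mul_odd_mul_sq_eq_five_mul_sq (U := U) (V := 2 ^ k * V) hc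
    (by linear_combination h)

lemma Rat.eq_zero_of_sq_add_mul_sq_eq_five_mul_sq {D : ℤ} (hD : Odd (padicValInt 2 D))
    {X Y Z : ℚ} (h : X ^ 2 + D * Y ^ 2 = 5 * Z ^ 2) : Z = 0 := by
  have hX := Rat.mul_den_eq_num X
  have hY := Rat.mul_den_eq_num Y
  have hZ := Rat.mul_den_eq_num Z
  have hint : Z.num * (X.den : ℤ) * Y.den = 0 := by
    refine Int.eq_zero_of_sq_add_mul_sq_eq_five_mul_sq (U := X.num * (Y.den : ℤ) * Z.den)
      (V := Y.num * (X.den : ℤ) * Z.den) hD ?_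
    have : ((X.num * Y.den * Z.den : ℤ) : ℚ) ^ 2 + D * ((Y.num * X.den * Z.den : ℤ) : ℚ) ^ 2
        = 5 * ((Z.num * X.den * Y.den : ℤ) : ℚ) ^ 2 := by
      push_cast
      rw [← hX, ← hY, ← hZ]
      linear_combination ((X.den : ℚ) * Y.den * Z.den) ^ 2 * h
    exact_mod_cast this
  simpa [Rat.den_ne_zero] using hint

lemma QuadraticMap.mul_map_smul_add_smul {K V : Type*} [Field K] [NeZero (2 : K)]
    [AddCommGroup V] [Module K V]
    (Q : QuadraticForm K V) (x y : V) (a b : K) :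
    Q x * Q (a • x + b • y) = (a * Q x + b * (polar Q x y / 2)) ^ 2
      + (Q x * Q y - (polar Q x y / 2) ^ 2) * b ^ 2 := by
  have h : Q (a • x + b • y) = a ^ 2 * Q x + a * b * polar Q x y + b ^ 2 * Q y := by
    rw [QuadraticMap.map_add Q (a • x) (b • y), QuadraticMap.map_smul, QuadraticMap.map_smul,
      QuadraticMap.polar_smul_left, QuadraticMap.polar_smul_right]
    simp only [smul_eq_mul]
    ring
  rw [h]
  field_simp
  ring

/-- Let `(V, Q)` be a positive definite quadratic space over `ℚ` and `x₁, x₂ ∈ V`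
linearly independent with integer Gram matrix `G`.  If `ν₂(det G)` is odd, then
`5·Q(x₁)` is not represented by `ℚx₁ + ℚx₂`. -/
theorem stmt11 (V : Type) [AddCommGroup V] [Module ℚ V] (Q : QuadraticForm ℚ V)
    (hpos : ∀ x : V, x ≠ 0 → 0 < Q x)
    (x₁ x₂ : V) (hli : LinearIndependent ℚ ![x₁, x₂])
    (G : Matrix (Fin 2) (Fin 2) ℤ)
    (hG : ∀ i j, (G i j : ℚ) = QuadraticMap.polar (⇑Q) (![x₁, x₂] i) (![x₁, x₂] j) / 2)
    (hval : Odd (padicValInt 2 G.det)) :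
    ¬ ∃ a b : ℚ, Q (a • x₁ + b • x₂) = 5 * Q x₁ := by
  rintro ⟨a, b, hab⟩
  have hx₁ : x₁ ≠ 0 := by simpa using hli.ne_zero 0
  have hdet : (G.det : ℚ) = Q x₁ * Q x₂ - (QuadraticMap.polar Q x₁ x₂ / 2) ^ 2 := by
    rw [Matrix.det_fin_two]
    push_cast
    simp only [hG, Matrix.cons_val_zero, Matrix.cons_val_one, QuadraticMap.polar_self,
      QuadraticMap.polar_comm Q x₂ x₁]
    ring
  refine (hpos x₁ hx₁).ne' (Rat.eq_zero_of_sq_add_mul_sq_eq_five_mul_sq hval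
    (X := a * Q x₁ + b * (QuadraticMap.polar Q x₁ x₂ / 2)) (Y := b) ?_)
  rw [hdet, ← QuadraticMap.mul_map_smul_add_smul, hab]
  ring
end

section
/- Let F be a totally real number field, α ∈ ℤ, and (L, Q) a totally positive definite quadratic O_F-lattice. Suppose v₁, ..., v_k ∈ L are linearly independent over F, all pairwise values B(v_i, v_j) (1 ≤ i, j ≤ k) are rational, and the rational quadratic space ℚv₁ + ⋯ + ℚv_k does not represent α. If v_{k+1} ∈ L satisfies Q(v_{k+1}) = α and the full Gram matrix (B(v_i,v_j))_{1≤i,j≤k+1} is rational, then v₁, ..., v_{k+1} are linearly independent over F. -/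
/-- Let `F` be a totally real number field, `α ∈ ℤ`, and `(V, Q)` a totally positive
definite quadratic space over `F` (containing the lattice `L`).  Suppose
`v₀, …, v_{k-1}` are linearly independent over `F`, all pairwise values of the
bilinear form `B` on `v₀, …, v_k` are rational, the rational span of `v₀, …, v_{k-1}`
does not represent `α`, and `Q(v_k) = α`.  Then `v₀, …, v_k` are linearly independent
over `F`. -/
theorem stmt12 (K : Type) [Field K] [NumberField K]
    -- K is totally real: every complex embedding comes from a real embedding
    (htr : ∀ φ : K →+* ℂ, ∃ σ : K →+* ℝ, Complex.ofRealHom.comp σ = φ)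
    (V : Type) [AddCommGroup V] [Module K V] (Q : QuadraticForm K V)
    -- Q is totally positive definite
    (hpos : ∀ (σ : K →+* ℝ) (x : V), x ≠ 0 → 0 < σ (Q x))
    (α : ℤ) (k : ℕ) (v : Fin (k + 1) → V)
    (hli : LinearIndependent K (fun i : Fin k => v i.castSucc))
    -- the Gram matrix of v₀, …, v_k is rational
    (hrat : ∀ i j : Fin (k + 1), ∃ q : ℚ,
      QuadraticMap.polar (⇑Q) (v i) (v j) / 2 = algebraMap ℚ K q)
    -- ℚv₀ + ⋯ + ℚv_{k-1} does not represent α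
    (hnotrep : ¬ ∃ c : Fin k → ℚ,
      Q (∑ i : Fin k, algebraMap ℚ K (c i) • v i.castSucc) = (α : K))
    (hlast : Q (v (Fin.last k)) = (α : K)) :
    LinearIndependent K v := by

  classical
  obtain ⟨φ⟩ : Nonempty (K →+* ℂ) := inferInstance
  obtain ⟨σ, -⟩ := htr φ
  -- definiteness at one embedding suffices
  have hQ0 : ∀ x : V, Q x = 0 → x = 0 := by
    intro x hx
    by_contra h
    have := hpos σ x h
    rw [hx, map_zero] at this
    exact lt_irrefl 0 this
  choose g hg using hrat
  have hg2 : ∀ i j, QuadraticMap.polar (⇑Q) (v i) (v j) = algebraMap ℚ K (2 * g i j) := by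
    intro i j
    have h := hg i j
    rw [div_eq_iff (two_ne_zero : (2:K) ≠ 0)] at h
    rw [h, map_mul, map_ofNat]
    ring
  -- sums through polar
  have hsumR : ∀ (x : V) (c : Fin k → K),
      QuadraticMap.polar (⇑Q) x (∑ i, c i • v i.castSucc)
        = ∑ i, c i * QuadraticMap.polar (⇑Q) x (v i.castSucc) := by
    intro x c
    simp only [← QuadraticMap.polarBilin_apply_apply]
    rw [map_sum]
    simp [smul_eq_mul]
  have hsumL : ∀ (x : V) (c : Fin k → K),
      QuadraticMap.polar (⇑Q) (∑ i, c i • v i.castSucc) x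
        = ∑ i, c i * QuadraticMap.polar (⇑Q) (v i.castSucc) x := by
    intro x c
    rw [QuadraticMap.polar_comm, hsumR]
    exact Finset.sum_congr rfl fun i _ => by rw [QuadraticMap.polar_comm]
  set G : Matrix (Fin k) (Fin k) ℚ :=
    Matrix.of fun i j => 2 * g i.castSucc j.castSucc with hGdef
  set GK : Matrix (Fin k) (Fin k) K := G.map (algebraMap ℚ K) with hGKdef
  have hGKapp : ∀ i j, GK i j = QuadraticMap.polar (⇑Q) (v i.castSucc) (v j.castSucc) := by
    intro i j
    rw [hg2]
    simp [hGKdef, hGdef]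
  have hKdet : GK.det ≠ 0 := by
    intro h0
    obtain ⟨c, hc0, hc⟩ := Matrix.exists_mulVec_eq_zero_iff.mpr h0
    set w : V := ∑ i, c i • v i.castSucc with hwdef
    have hw0 : w ≠ 0 := by
      intro hw
      exact hc0 (funext fun i => Fintype.linearIndependent_iff.mp hli c hw i)
    have hpw : ∀ j : Fin k, QuadraticMap.polar (⇑Q) (v j.castSucc) w = 0 := by
      intro j
      rw [hwdef, hsumR]
      have h := congrFun hc j
      simp only [Matrix.mulVec, dotProduct, Pi.zero_apply] at h
      rw [← h]
      exact Finset.sum_congr rfl fun i _ => by rw [hGKapp, mul_comm]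
    have hww : QuadraticMap.polar (⇑Q) w w = 0 := by
      rw [hwdef, hsumL]
      refine Finset.sum_eq_zero fun i _ => ?_
      rw [hpw, mul_zero]
    have hQw : Q w = 0 := by
      have := QuadraticMap.polar_self Q w
      rw [hww, two_smul] at this
      exact add_self_eq_zero.mp this.symm
    exact hw0 (hQ0 w hQw)
  have hQdet : IsUnit G.det := by
    rw [isUnit_iff_ne_zero]
    intro h0
    apply hKdet
    have : (algebraMap ℚ K) G.det = GK.det := RingHom.map_det _ G
    rw [h0, map_zero] at this
    exact this.symm
  have hv : v = Fin.snoc (fun i : Fin k => v i.castSucc) (v (Fin.last k)) := by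
    funext i
    refine Fin.lastCases ?_ ?_ i <;> simp
  rw [hv, linearIndependent_fin_snoc]
  refine ⟨hli, ?_⟩
  intro hmem
  obtain ⟨c, hc⟩ := (Submodule.mem_span_range_iff_exists_fun K).mp hmem
  set b : Fin k → ℚ := fun j => 2 * g j.castSucc (Fin.last k) with hbdef
  have heq : GK.mulVec c = fun j => algebraMap ℚ K (b j) := by
    funext j
    have h := hg2 j.castSucc (Fin.last k)
    rw [← hc, hsumR] at h
    simp only [Matrix.mulVec, dotProduct]
    rw [← h]
    exact Finset.sum_congr rfl fun i _ => by rw [hGKapp, mul_comm]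
  set d : Fin k → ℚ := G⁻¹.mulVec b with hddef
  have hd : G.mulVec d = b := by
    rw [hddef, Matrix.mulVec_mulVec, Matrix.mul_nonsing_inv G hQdet, Matrix.one_mulVec]
  have hcd : c = fun i => algebraMap ℚ K (d i) := by
    have h1 : GK.mulVec (fun i => algebraMap ℚ K (d i)) = fun j => algebraMap ℚ K (b j) := by
      funext j
      have h := congrArg (algebraMap ℚ K) (congrFun hd j)
      simp only [Matrix.mulVec, dotProduct, map_sum, map_mul] at h
      simpa [hGKdef, Matrix.map_apply, Matrix.mulVec, dotProduct] using h
    have h2 : GK.mulVec c = GK.mulVec (fun i => algebraMap ℚ K (d i)) := heq.trans h1.symm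
    have hinv : Invertible GK := GK.invertibleOfIsUnitDet (isUnit_iff_ne_zero.mpr hKdet)
    exact Matrix.mulVec_injective_of_invertible GK h2
  refine hnotrep ⟨d, ?_⟩
  have : (∑ i : Fin k, algebraMap ℚ K (d i) • v i.castSucc) = v (Fin.last k) := by
    rw [← hc]
    exact Finset.sum_congr rfl fun i _ => by rw [congrFun hcd i]
  rw [this, hlast]
end

section
/- Let M = [[m₁₁, m₁₂],[m₁₂, m₂₂]] be a positive definite 2×2 integer matrix different from the identity matrix. Then there exist a prime p ≤ m₁₁·m₂₂ and an integer C with 2 ≤ C ≤ γ_p (where γ_p is the least quadratic non-residue mod p, with γ₂ := 7) such that every positive semidefinite integer 3×3 matrix of block form [[M, v],[vᵀ, C·m₁₁]] is in fact positive definite. -/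
/-- The least positive quadratic non-residue modulo `p` for an odd prime `p`, with the
convention `γ₂ = 7`. -/
noncomputable def leastNonRes (p : ℕ) : ℕ :=
  if p = 2 then 7 else sInf {n : ℕ | ¬ IsSquare ((n : ZMod p))}

/-!
Write `d = m₁₁m₂₂ - m₁₂²`. The bordered matrix has determinant `C m₁₁ d - Q(v)` with
`Q(v) = m₂₂v₁² - 2m₁₂v₁v₂ + m₁₁v₂²`, and `m₁₁ Q(v) = (m₁₁v₂ - m₁₂v₁)² + d v₁²`. So if it is
singular and `d = e²f` with `f` squarefree, the ternary form `x² + f y² - C z²` has an integer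
zero with `z = m₁₁ ≠ 0`. It remains to choose `C` making that form anisotropic. For `f ≥ 3` take
an odd prime `q ∣ f` and `C = γ_q`: reducing mod `q` shows that every zero is divisible by `q`,
and infinite descent leaves only the zero vector. For `f = 1, 2` take `p = 2` and `C = 3, 5`,
where `-f` is a non-residue mod `C`. Finally, a positive semidefinite matrix with nonzero
determinant is definite.
-/

open Matrix

theorem eq_zero_of_sq_eq_mul_sq {K : Type*} [Field K] {a x y : K} (ha : ¬IsSquare a)
    (h : x ^ 2 = a * y ^ 2) : x = 0 ∧ y = 0 := by
  have hy : y = 0 := by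
    by_contra hy
    exact ha ⟨x / y, by field_simp; linear_combination -h⟩
  exact ⟨pow_eq_zero_iff two_ne_zero |>.mp (by simpa [hy] using h), hy⟩

theorem Int.dvd_of_dvd_sq_sub_mul_sq {q : ℕ} (hq : q.Prime) {a x y : ℤ}
    (ha : ¬IsSquare (a : ZMod q)) (h : (q : ℤ) ∣ x ^ 2 - a * y ^ 2) :
    (q : ℤ) ∣ x ∧ (q : ℤ) ∣ y := by
  have := Fact.mk hq
  simp only [← ZMod.intCast_zmod_eq_zero_iff_dvd] at h ⊢
  push_cast at h
  exact eq_zero_of_sq_eq_mul_sq ha (sub_eq_zero.mp h)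

theorem QuadraticMap.anisotropic_of_forall_dvd {ι : Type*} {Q : QuadraticMap ℤ (ι → ℤ) ℤ}
    {q : ℤ} (hq : 1 < q.natAbs) (h : ∀ x, Q x = 0 → ∀ i, q ∣ x i) : Q.Anisotropic := by
  have hq0 : q ≠ 0 := by rintro rfl; simp at hq
  have hpow : ∀ k x, Q x = 0 → ∀ i, q ^ k ∣ x i := by
    intro k
    induction k with
    | zero => simp
    | succ k ih =>
      intro x hx i
      choose y hy using h x hx
      have hQy : Q y = 0 := by
        rw [show x = q • y from funext hy, QuadraticMap.map_smul, smul_eq_mul] at hx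
        simpa [hq0] using hx
      rw [hy i, pow_succ']
      exact mul_dvd_mul_left q (ih y hQy i)
  intro x hx
  funext i
  by_contra hxi
  obtain ⟨k, hk⟩ := Int.finiteMultiplicity_iff.mpr ⟨hq.ne', hxi⟩
  exact hk (hpow _ x hx i)

theorem weightedSumSquares_fin_three_apply (f C : ℤ) (x : Fin 3 → ℤ) :
    QuadraticMap.weightedSumSquares ℤ ![1, f, -C] x = x 0 ^ 2 + f * x 1 ^ 2 - C * x 2 ^ 2 := by
  simp only [QuadraticMap.weightedSumSquares_apply, Fin.sum_univ_three, cons_val_zero,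
    cons_val_one, cons_val, smul_eq_mul]
  ring

theorem anisotropic_weightedSumSquares_of_dvd {f C q : ℤ} (hq : 1 < q.natAbs)
    (h : ∀ v t m : ℤ, v ^ 2 + f * t ^ 2 = C * m ^ 2 → q ∣ v ∧ q ∣ t ∧ q ∣ m) :
    (QuadraticMap.weightedSumSquares ℤ ![1, f, -C]).Anisotropic := by
  refine QuadraticMap.anisotropic_of_forall_dvd hq fun x hx => ?_
  rw [weightedSumSquares_fin_three_apply] at hx
  obtain ⟨h0, h1, h2⟩ := h (x 0) (x 1) (x 2) (by linear_combination hx)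
  intro i
  fin_cases i <;> assumption

theorem dvd_of_sq_add_mul_sq_eq_of_not_isSquare {q : ℕ} (hq : q.Prime) {f C v t m : ℤ}
    (hC : ¬IsSquare (C : ZMod q)) (hqf : (q : ℤ) ∣ f) (hq2f : ¬(q : ℤ) * q ∣ f)
    (h : v ^ 2 + f * t ^ 2 = C * m ^ 2) : (q : ℤ) ∣ v ∧ (q : ℤ) ∣ t ∧ (q : ℤ) ∣ m := by
  have hqp : Prime (q : ℤ) := Nat.prime_iff_prime_int.mp hq
  obtain ⟨hv, hm⟩ := Int.dvd_of_dvd_sq_sub_mul_sq hq hC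
    (by rw [show v ^ 2 - C * m ^ 2 = -(f * t ^ 2) by linear_combination h]
        exact (dvd_mul_of_dvd_left hqf _).neg_right)
  refine ⟨hv, ?_, hm⟩
  obtain ⟨f', rfl⟩ := hqf
  obtain ⟨v', rfl⟩ := hv
  obtain ⟨m', rfl⟩ := hm
  have hf't : (q : ℤ) ∣ f' * t ^ 2 :=
    ⟨C * m' ^ 2 - v' ^ 2, mul_left_cancel₀ hqp.ne_zero (by linear_combination h)⟩
  have hf' : ¬(q : ℤ) ∣ f' := fun hd => hq2f (mul_dvd_mul_left _ hd)
  exact hqp.dvd_of_dvd_pow ((hqp.dvd_mul.mp hf't).resolve_left hf')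

theorem dvd_of_sq_add_mul_sq_eq_self_mul_sq {q : ℕ} (hq : q.Prime) {f v t m : ℤ}
    (hf : ¬IsSquare ((-f : ℤ) : ZMod q)) (h : v ^ 2 + f * t ^ 2 = q * m ^ 2) :
    (q : ℤ) ∣ v ∧ (q : ℤ) ∣ t ∧ (q : ℤ) ∣ m := by
  have hqp : Prime (q : ℤ) := Nat.prime_iff_prime_int.mp hq
  obtain ⟨hv, ht⟩ := Int.dvd_of_dvd_sq_sub_mul_sq (x := v) (y := t) hq hf
    ⟨m ^ 2, by linear_combination h⟩
  refine ⟨hv, ht, hqp.dvd_of_dvd_pow (n := 2) ?_⟩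
  obtain ⟨v', rfl⟩ := hv
  obtain ⟨t', rfl⟩ := ht
  exact ⟨v' ^ 2 + f * t' ^ 2, mul_left_cancel₀ hqp.ne_zero (by linear_combination -h)⟩

theorem leastNonRes_spec {q : ℕ} (hq : q.Prime) (hq2 : q ≠ 2) :
    ¬IsSquare (leastNonRes q : ZMod q) ∧ 2 ≤ leastNonRes q := by
  have := Fact.mk hq
  have hne : {n : ℕ | ¬IsSquare (n : ZMod q)}.Nonempty := by
    obtain ⟨a, ha⟩ := FiniteField.exists_nonsquare (F := ZMod q) (by rwa [ZMod.ringChar_zmod_n])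
    exact ⟨a.val, by simpa using ha⟩
  have hmem : ¬IsSquare (leastNonRes q : ZMod q) := by
    rw [leastNonRes, if_neg hq2]
    exact Nat.sInf_mem hne
  refine ⟨hmem, ?_⟩
  by_contra! hlt
  interval_cases h : leastNonRes q
  · exact hmem (by simp)
  · exact hmem (by simp)

theorem Squarefree.exists_prime_ne_two_dvd {f : ℕ} (hf : Squarefree f) (hf3 : 3 ≤ f) :
    ∃ q, q.Prime ∧ q ≠ 2 ∧ q ∣ f := by
  obtain ⟨g, hg⟩ : ∃ g, g ∣ f ∧ ¬2 ∣ g ∧ 3 ≤ g := by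
    by_cases h2 : 2 ∣ f
    · obtain ⟨g, rfl⟩ := h2
      have hg2 : ¬2 ∣ g := fun ⟨c, hc⟩ =>
        Nat.prime_two.not_isUnit (hf 2 ⟨c, by rw [hc]; ring⟩)
      exact ⟨g, dvd_mul_left g 2, hg2, by omega⟩
    · exact ⟨f, dvd_rfl, h2, hf3⟩
  exact ⟨g.minFac, Nat.minFac_prime (by omega), fun h => hg.2.1 (h ▸ g.minFac_dvd),
    g.minFac_dvd.trans hg.1⟩

theorem exists_prime_anisotropic (f : ℕ) (hf : Squarefree f) :
    ∃ (p : ℕ) (C : ℤ), p.Prime ∧ p ≤ max f 2 ∧ 2 ≤ C ∧ C ≤ (leastNonRes p : ℤ) ∧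
      (QuadraticMap.weightedSumSquares ℤ ![1, (f : ℤ), -C]).Anisotropic := by
  have hf1 : 1 ≤ f := Nat.pos_of_ne_zero hf.ne_zero
  rcases Nat.lt_or_ge f 3 with hf3 | hf3
  · interval_cases f
    · refine ⟨2, 3, Nat.prime_two, by norm_num, by norm_num, by norm_num [leastNonRes],
        anisotropic_weightedSumSquares_of_dvd (q := 3) (by norm_num) fun v t m h => ?_⟩
      exact_mod_cast dvd_of_sq_add_mul_sq_eq_self_mul_sq (q := 3) (f := 1) (by norm_num)
        (by decide) (by push_cast; linear_combination h)
    · refine ⟨2, 5, Nat.prime_two, by norm_num, by norm_num, by norm_num [leastNonRes],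
        anisotropic_weightedSumSquares_of_dvd (q := 5) (by norm_num) fun v t m h => ?_⟩
      exact_mod_cast dvd_of_sq_add_mul_sq_eq_self_mul_sq (q := 5) (f := 2) (by norm_num)
        (by decide) (by push_cast; linear_combination h)
  · obtain ⟨q, hq, hq2, hqf⟩ := hf.exists_prime_ne_two_dvd hf3
    obtain ⟨hC, hC2⟩ := leastNonRes_spec hq hq2
    refine ⟨q, leastNonRes q, hq, le_max_of_le_left (Nat.le_of_dvd (by omega) hqf),
      by exact_mod_cast hC2, le_rfl, anisotropic_weightedSumSquares_of_dvd (q := q)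
        (by simpa using hq.one_lt) fun v t m h => ?_⟩
    refine dvd_of_sq_add_mul_sq_eq_of_not_isSquare hq (by exact_mod_cast hC)
      (Int.natCast_dvd_natCast.mpr hqf) (fun hq2f => hq.not_isUnit (hf q ?_)) h
    exact_mod_cast hq2f

theorem exists_sq_add_mul_sq_eq {e f x u N : ℤ} (hf : Squarefree f) (he : e ≠ 0)
    (h : x ^ 2 + e ^ 2 * f * u ^ 2 = e ^ 2 * f * N) : ∃ z, u ^ 2 + f * z ^ 2 = N := by
  have hx : x ^ 2 = e ^ 2 * (f * (N - u ^ 2)) := by linear_combination h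
  obtain ⟨y, rfl⟩ : e ∣ x := (Int.pow_dvd_pow_iff two_ne_zero).mp ⟨_, hx⟩
  have hy : y ^ 2 = f * (N - u ^ 2) :=
    mul_left_cancel₀ (pow_ne_zero 2 he) (by rw [← mul_pow, hx])
  obtain ⟨z, rfl⟩ : f ∣ y := (hf.dvd_pow_iff_dvd two_ne_zero).mp ⟨_, hy⟩
  refine ⟨z, mul_left_cancel₀ hf.ne_zero ?_⟩
  linear_combination hy

theorem Int.exists_sq_mul_squarefree_of_pos {d : ℤ} (hd : 0 < d) :
    ∃ (e : ℤ) (f : ℕ), e ≠ 0 ∧ Squarefree f ∧ (f : ℤ) ≤ d ∧ d = e ^ 2 * f := by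
  obtain ⟨f, e, hfe, hf⟩ := Nat.sq_mul_squarefree d.toNat
  have hde : d = (e : ℤ) ^ 2 * f := by
    rw [← Int.toNat_of_nonneg hd.le, ← hfe]
    push_cast
    ring
  have he : (e : ℤ) ≠ 0 := by
    rintro h
    rw [h, zero_pow two_ne_zero, zero_mul] at hde
    exact hd.ne' hde
  refine ⟨e, f, he, hf, ?_, hde⟩
  calc (f : ℤ) ≤ (e : ℤ) ^ 2 * f := le_mul_of_one_le_left (by positivity) (one_le_pow₀ (by omega))
    _ = d := hde.symm

theorem det_fromBlocks_fin_two_fin_one {R : Type*} [CommRing R] (a b c x : R)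
    (v : Matrix (Fin 2) (Fin 1) R) :
    (fromBlocks !![a, b; b, c] v vᵀ (of fun _ _ => x)).det
      = x * (a * c - b ^ 2) - (c * v 0 0 ^ 2 - 2 * b * v 0 0 * v 1 0 + a * v 1 0 ^ 2) := by
  have h : reindex finSumFinEquiv finSumFinEquiv (fromBlocks !![a, b; b, c] v vᵀ (of fun _ _ => x))
      = !![a, b, v 0 0; b, c, v 1 0; v 0 0, v 1 0, x] := by
    ext i j
    fin_cases i <;> fin_cases j <;> rfl
  rw [← det_reindex_self finSumFinEquiv, h, det_fin_three]
  simp only [of_apply, cons_val', cons_val_zero, cons_val_one, cons_val, cons_val_fin_one]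
  ring

theorem exists_sq_add_mul_sq_eq_of_det_eq_zero {a b c C e f : ℤ} (v : Matrix (Fin 2) (Fin 1) ℤ)
    (hf : Squarefree f) (he : e ≠ 0) (hd : a * c - b ^ 2 = e ^ 2 * f)
    (h : (fromBlocks !![a, b; b, c] v vᵀ (of fun _ _ => C * a)).det = 0) :
    ∃ z, v 0 0 ^ 2 + f * z ^ 2 = C * a ^ 2 := by
  rw [det_fromBlocks_fin_two_fin_one] at h
  exact exists_sq_add_mul_sq_eq hf he (x := a * v 1 0 - b * v 0 0)
    (by linear_combination -a * h + (C * a ^ 2 - v 0 0 ^ 2) * hd)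

theorem pos_and_det_pos_of_posDef_fin_two {a b c : ℤ}
    (h : (!![a, b; b, c].map (Int.cast : ℤ → ℝ)).PosDef) : 0 < a ∧ 0 < a * c - b ^ 2 := by
  have hd := h.det_pos
  rw [← Int.cast_det, det_fin_two_of] at hd
  exact ⟨by simpa using h.diag_pos (i := 0), by rw [pow_two]; exact_mod_cast hd⟩

theorem two_le_mul_of_det_pos_of_ne_one {a b c : ℤ} (ha : 0 < a) (hd : 0 < a * c - b ^ 2)
    (hne : !![a, b; b, c] ≠ 1) : 2 ≤ a * c := by
  by_contra! hlt
  have hb : b = 0 := by nlinarith [sq_nonneg b]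
  subst hb
  have hac : a * c = 1 := by nlinarith
  have hc : 0 ≤ c := by nlinarith
  rw [Int.eq_one_of_mul_eq_one_right ha.le hac, Int.eq_one_of_mul_eq_one_left hc hac] at hne
  exact hne one_fin_two.symm

/-- Let `M = [[m₁₁,m₁₂],[m₁₂,m₂₂]]` be a positive definite 2×2 integer matrix different
from the identity.  Then there exist a prime `p ≤ m₁₁·m₂₂` and an integer `C` with
`2 ≤ C ≤ γ_p` such that every positive semidefinite integer matrix of block form
`[[M, v],[vᵀ, C·m₁₁]]` is in fact positive definite. -/
theorem stmt14 (m11 m12 m22 : ℤ)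
    (hpd : ((!![m11, m12; m12, m22]).map (Int.cast : ℤ → ℝ)).PosDef)
    (hne : !![m11, m12; m12, m22] ≠ (1 : Matrix (Fin 2) (Fin 2) ℤ)) :
    ∃ (p : ℕ) (C : ℤ), p.Prime ∧ (p : ℤ) ≤ m11 * m22 ∧ 2 ≤ C ∧ C ≤ (leastNonRes p : ℤ) ∧
      ∀ (v : Matrix (Fin 2) (Fin 1) ℤ),
        (((Matrix.fromBlocks !![m11, m12; m12, m22] v v.transpose
            (Matrix.of fun _ _ => C * m11)).map (Int.cast : ℤ → ℝ)).PosSemidef) →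
        (((Matrix.fromBlocks !![m11, m12; m12, m22] v v.transpose
            (Matrix.of fun _ _ => C * m11)).map (Int.cast : ℤ → ℝ)).PosDef) := by
  obtain ⟨hm11, hd⟩ := pos_and_det_pos_of_posDef_fin_two hpd
  obtain ⟨e, f, he, hf, hfd, hde⟩ := Int.exists_sq_mul_squarefree_of_pos hd
  obtain ⟨p, C, hp, hpf, hC2, hCp, hA⟩ := exists_prime_anisotropic f hf
  refine ⟨p, C, hp, ?_, hC2, hCp, fun v hv => ?_⟩
  · calc (p : ℤ) ≤ max (f : ℤ) 2 := by exact_mod_cast hpf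
      _ ≤ m11 * m22 := max_le (hfd.trans (sub_le_self _ (sq_nonneg m12)))
        (two_le_mul_of_det_pos_of_ne_one hm11 hd hne)
  rw [hv.posDef_iff_det_ne_zero, ← Int.cast_det, Int.cast_ne_zero]
  intro hdet
  obtain ⟨z, hz⟩ :=
    exists_sq_add_mul_sq_eq_of_det_eq_zero v (Int.squarefree_natCast.mpr hf) he hde hdet
  have hzero := hA ![v 0 0, z, m11] (by
    rw [weightedSumSquares_fin_three_apply]
    simp only [cons_val_zero, cons_val_one, cons_val]
    linear_combination hz)
  exact hm11.ne' (by simpa using congrFun hzero 2)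
end

section
/- Let M, N be n×n matrices over a commutative ring R. Then det(M+N) = Σ_{r=0}^{n} Σ_{α,β ∈ Ξ_r} (−1)^{s(α)+s(β)} det M_α^β · det N_{ᾱ}^{β̄}, where Ξ_r is the set of strictly increasing sequences of length r from {1,...,n}, s(α) is the sum of the entries of α, M_α^β is obtained from M by deleting the rows indexed by α and columns indexed by β, and N_{ᾱ}^{β̄} is obtained from N by keeping only the rows indexed by α and columns indexed by β. -/
/-!
Expanding each row of `M + N` by multilinearity writes `det (M + N)` as the sum, over the sets
`α` of rows taken from `N`, of the determinants of the row-mixed matrices. Each of these is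
expanded by the generalized Laplace expansion along the rows `α`, whose `α`-minors come from `N`
and whose complementary minors come from `M`. The Laplace expansion itself follows from the
Leibniz formula: the permutations carrying `α` onto `β` are exactly the `e_β ∘ (τ₁ ⊕ τ₂) ∘ e_α⁻¹`,
where `e_γ : Fin k ⊕ Fin m ≃ Fin n` enumerates `γ` and then `γᶜ` in increasing order. Counting
inversions, `e_γ` differs from the standard identification `Fin k ⊕ Fin m ≃ Fin n` by a
permutation of sign `(-1) ^ (∑ γ + k.choose 2)`, and the `k.choose 2` cancels between `α` and `β`.
-/

open Finset Equiv

variable {n k m : ℕ}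

theorem Finset.sum_card_filter_lt {α : Type*} [LinearOrder α] (s : Finset α) :
    ∑ j ∈ s, #{i ∈ s | i < j} = (#s).choose 2 := by
  induction s using Finset.induction_on_max with
  | empty => simp
  | insert a s hlt ih =>
    have ha : a ∉ s := fun h => lt_irrefl a (hlt a h)
    have hfilter : ∀ j ∈ s, #{i ∈ insert a s | i < j} = #{i ∈ s | i < j} := fun j hj => by
      rw [filter_insert, if_neg (hlt j hj).not_gt]
    rw [sum_insert ha, sum_congr rfl hfilter, ih, filter_insert, if_neg (lt_irrefl a),
      filter_true_of_mem hlt, card_insert_of_notMem ha, Nat.choose_succ_succ', Nat.choose_one_right,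
      add_comm]

/-- The permutation sending `y` to its position in the list of the elements of `s` in increasing
order followed by those of `sᶜ` in increasing order. -/
def Finset.shufflePerm (s : Finset (Fin n)) (hk : #s = k) (hm : #sᶜ = m) : Perm (Fin n) :=
  (finSumEquivOfFinset hk hm).symm.trans <| finSumFinEquiv.trans <| finCongr <| by
    rw [← hk, ← hm, card_add_card_compl, Fintype.card_fin]

theorem Finset.shufflePerm_lt_iff (s : Finset (Fin n)) (hk : #s = k) (hm : #sᶜ = m) {i j : Fin n}
    (hij : i < j) : s.shufflePerm hk hm i < s.shufflePerm hk hm j ↔ (j ∈ s → i ∈ s) := by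
  obtain ⟨x, rfl⟩ := (finSumEquivOfFinset hk hm).surjective i
  obtain ⟨y, rfl⟩ := (finSumEquivOfFinset hk hm).surjective j
  have hs : ∀ b, sᶜ.orderEmbOfFin hm b ∉ s := fun b => mem_compl.1 (orderEmbOfFin_mem _ _ b)
  simp only [shufflePerm, trans_apply, symm_apply_apply, finCongr_apply, Fin.lt_def, Fin.val_cast]
  rcases x with a | a <;> rcases y with b | b <;>
    simp [orderEmbOfFin_mem, hs] at hij ⊢ <;> omega

theorem Finset.sign_shufflePerm (s : Finset (Fin n)) (hk : #s = k) (hm : #sᶜ = m) :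
    Perm.sign (s.shufflePerm hk hm) = (-1) ^ (∑ j ∈ s, (j : ℕ) + k.choose 2) := by
  have hinv : ∀ j, ∏ i ∈ Iio j,
      (if s.shufflePerm hk hm i < s.shufflePerm hk hm j then (1 : ℤˣ) else -1) =
        if j ∈ s then (-1) ^ #{i ∈ Iio j | i ∉ s} else 1 := fun j => by
    rw [prod_congr rfl fun i hi => if_congr (s.shufflePerm_lt_iff hk hm (mem_Iio.1 hi)) rfl rfl]
    split_ifs with hj
    · simp [hj, prod_ite]
    · simp [hj]
  have hexp : ∑ j ∈ s, #{i ∈ Iio j | i ∉ s} + k.choose 2 = ∑ j ∈ s, (j : ℕ) := by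
    rw [← hk, ← s.sum_card_filter_lt, ← sum_add_distrib]
    refine sum_congr rfl fun j _ => ?_
    rw [← Fin.card_Iio j, ← card_filter_add_card_filter_not (· ∈ s) (s := Iio j), add_comm]
    congr 2
    ext i
    simp [and_comm]
  rw [Perm.sign_eq_prod_prod_Iio, prod_congr rfl fun j _ => hinv j, prod_ite_mem, univ_inter,
    prod_pow_eq_pow_sum, ← hexp, add_assoc, ← two_mul, pow_add, pow_mul]
  simp

theorem Finset.exists_finSumEquivOfFinset_inl_eq {α : Type*} [Fintype α] [LinearOrder α]
    {s : Finset α} (hk : #s = k) (hm : #sᶜ = m) {y : α} (hy : y ∈ s) :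
    ∃ a, finSumEquivOfFinset hk hm (Sum.inl a) = y := by
  rw [← mem_coe, ← s.range_orderEmbOfFin hk] at hy
  exact hy

theorem Finset.sign_finSumEquivOfFinset_symm_trans {s t : Finset (Fin n)} (hs : #s = k)
    (hsc : #sᶜ = m) (ht : #t = k) (htc : #tᶜ = m) :
    Perm.sign ((finSumEquivOfFinset hs hsc).symm.trans (finSumEquivOfFinset ht htc)) =
      (-1) ^ (∑ i ∈ s, ((i : ℕ) + 1) + ∑ j ∈ t, ((j : ℕ) + 1)) := by
  have hQ : (finSumEquivOfFinset hs hsc).symm.trans (finSumEquivOfFinset ht htc) =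
      (s.shufflePerm hs hsc).trans (t.shufflePerm ht htc).symm := by
    ext; simp [shufflePerm]
  rw [hQ, Perm.sign_trans, Perm.sign_symm, sign_shufflePerm, sign_shufflePerm, ← pow_add]
  refine neg_one_pow_congr ?_
  simp only [sum_add_distrib, sum_const, hs, ht, smul_eq_mul, mul_one]
  simp [Nat.even_add]
  tauto

theorem Finset.sum_perm_map_eq_eq_sum_sumCongrHom {α M : Type*} [Fintype α] [LinearOrder α]
    [AddCommMonoid M] (f : Perm α → M) {s t : Finset α} (hs : #s = k) (hsc : #sᶜ = m)
    (ht : #t = k) (htc : #tᶜ = m) :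
    ∑ σ with s.map σ.toEmbedding = t, f σ =
      ∑ τ : Perm (Fin k) × Perm (Fin m), f ((finSumEquivOfFinset hs hsc).symm.trans
        ((Perm.sumCongrHom _ _ τ).trans (finSumEquivOfFinset ht htc))) := by
  set es := finSumEquivOfFinset hs hsc
  set et := finSumEquivOfFinset ht htc
  symm
  refine sum_bij (fun τ _ => es.symm.trans ((Perm.sumCongrHom _ _ τ).trans et)) ?_ ?_ ?_ ?_
  · intro τ _
    rw [mem_filter]
    refine ⟨mem_univ _, eq_of_subset_of_card_le ?_ (by simp [hs, ht])⟩
    intro y hy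
    obtain ⟨x, hx, rfl⟩ := mem_map.1 hy
    obtain ⟨a, rfl⟩ := exists_finSumEquivOfFinset_inl_eq hs hsc hx
    change et (Perm.sumCongr τ.1 τ.2 (es.symm (es (Sum.inl a)))) ∈ t
    rw [symm_apply_apply]
    exact orderEmbOfFin_mem t ht _
  · intro τ _ τ' _ h
    apply Perm.sumCongrHom_injective
    ext x
    simpa [es] using congr(et.symm ($h (es x)))
  · intro σ hσ
    rw [mem_filter] at hσ
    have hmaps :
        Set.MapsTo (es.trans (σ.trans et.symm)) (Set.range Sum.inl) (Set.range Sum.inl) := by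
      rintro _ ⟨a, rfl⟩
      obtain ⟨b, hb⟩ := exists_finSumEquivOfFinset_inl_eq ht htc
        (hσ.2 ▸ mem_map_of_mem σ.toEmbedding (orderEmbOfFin_mem s hs a))
      exact ⟨b, by simp only [trans_apply, es, finSumEquivOfFinset_inl, eq_symm_apply]; exact hb⟩
    obtain ⟨τ, hτ⟩ := Perm.mem_sumCongrHom_range_of_perm_mapsTo_inl hmaps
    exact ⟨τ, mem_univ _, by ext y; simp [hτ]⟩
  · intro τ _
    rfl

namespace Matrix

variable {R : Type*} [CommRing R]

theorem det_eq_sum_sign_mul_prod_apply {ι : Type*} [Fintype ι] [DecidableEq ι] (A : Matrix ι ι R) :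
    A.det = ∑ σ : Perm ι, (Perm.sign σ : ℤ) * ∏ i, A i (σ i) := by
  rw [← det_transpose, det_apply']
  rfl

theorem det_eq_sum_laplace_rows (A : Matrix (Fin n) (Fin n) R) (α : Finset (Fin n)) :
    A.det = ∑ β : Finset (Fin n),
        if h : α.card = β.card then
          (-1 : R) ^ ((∑ i ∈ α, ((i : ℕ) + 1)) + (∑ j ∈ β, ((j : ℕ) + 1))) *
          (A.submatrix
              (fun i : Fin (αᶜ.card) => ((αᶜ.orderIsoOfFin rfl i : Fin n)))
              (fun j : Fin (αᶜ.card) =>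
                ((βᶜ.orderIsoOfFin
                  (by rw [Finset.card_compl, Finset.card_compl, h]) j : Fin n)))).det *
          (A.submatrix
              (fun i : Fin (α.card) => ((α.orderIsoOfFin rfl i : Fin n)))
              (fun j : Fin (α.card) => ((β.orderIsoOfFin h.symm j : Fin n)))).det
        else 0 := by
  rw [det_eq_sum_sign_mul_prod_apply,
    ← sum_fiberwise univ (fun σ : Perm (Fin n) => α.map σ.toEmbedding)]
  refine sum_congr rfl fun β _ => ?_
  split_ifs with h
  · have hc : #βᶜ = #αᶜ := by rw [card_compl, card_compl, h]
    rw [sum_perm_map_eq_eq_sum_sumCongrHom _ rfl rfl h.symm hc, Fintype.sum_prod_type, mul_assoc,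
      mul_comm (det _), det_eq_sum_sign_mul_prod_apply, det_eq_sum_sign_mul_prod_apply,
      sum_mul_sum, mul_sum]
    refine sum_congr rfl fun τ₁ _ => ?_
    rw [mul_sum]
    refine sum_congr rfl fun τ₂ _ => ?_
    rw [Perm.sumCongrHom_apply, Perm.sign_trans_trans, Perm.sign_sumCongr,
      sign_finSumEquivOfFinset_symm_trans, ← (finSumEquivOfFinset (s := α) rfl rfl).prod_comp,
      Fintype.prod_sum_type]
    simp only [trans_apply, symm_apply_apply]
    simp only [sumCongr_apply, Sum.map_inl, Sum.map_inr, finSumEquivOfFinset_inl,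
      finSumEquivOfFinset_inr, submatrix_apply, coe_orderIsoOfFin_apply]
    push_cast
    ring
  · refine sum_eq_zero fun σ hσ => absurd ?_ h
    rw [← (mem_filter.1 hσ).2, card_map]

section RowPiecewise

variable {ι ι' κ κ' α : Type*} [DecidableEq ι]

def rowPiecewise (s : Finset ι) (N M : Matrix ι κ α) : Matrix ι κ α :=
  of fun i => if i ∈ s then N i else M i

theorem submatrix_rowPiecewise_of_mem {s : Finset ι} (N M : Matrix ι κ α) {r : ι' → ι}
    (hr : ∀ i, r i ∈ s) (c : κ' → κ) : (rowPiecewise s N M).submatrix r c = N.submatrix r c := by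
  ext i j
  simp [rowPiecewise, hr i]

theorem submatrix_rowPiecewise_of_notMem {s : Finset ι} (N M : Matrix ι κ α) {r : ι' → ι}
    (hr : ∀ i, r i ∉ s) (c : κ' → κ) : (rowPiecewise s N M).submatrix r c = M.submatrix r c := by
  ext i j
  simp [rowPiecewise, hr i]

end RowPiecewise

theorem det_add_eq_sum_det_rowPiecewise {ι : Type*} [Fintype ι] [DecidableEq ι]
    (M N : Matrix ι ι R) : (M + N).det = ∑ s : Finset ι, (rowPiecewise s N M).det := by
  rw [add_comm]
  exact detRowAlternating.toMultilinearMap.map_add_univ N M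

end Matrix

/-- The Marcus determinant formula for a sum of two matrices:
`det (M + N)` is the sum over all pairs of equal-size index sets `α, β` of
`(−1)^{s(α)+s(β)} · det M_α^β · det N_ᾱ^β̄`, where `M_α^β` deletes the rows `α` and
columns `β` and `N_ᾱ^β̄` keeps only the rows `α` and columns `β`; `s(α)` is the sum
of the (1-based) indices in `α`. -/
theorem stmt16 {R : Type} [CommRing R] {n : ℕ} (M N : Matrix (Fin n) (Fin n) R) :
    (M + N).det =
      ∑ α : Finset (Fin n), ∑ β : Finset (Fin n),
        if h : α.card = β.card then
          (-1 : R) ^ ((∑ i ∈ α, ((i : ℕ) + 1)) + (∑ j ∈ β, ((j : ℕ) + 1))) *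
          (M.submatrix
              (fun i : Fin (αᶜ.card) => ((αᶜ.orderIsoOfFin rfl i : Fin n)))
              (fun j : Fin (αᶜ.card) =>
                ((βᶜ.orderIsoOfFin
                  (by rw [Finset.card_compl, Finset.card_compl, h]) j : Fin n)))).det *
          (N.submatrix
              (fun i : Fin (α.card) => ((α.orderIsoOfFin rfl i : Fin n)))
              (fun j : Fin (α.card) => ((β.orderIsoOfFin h.symm j : Fin n)))).det
        else 0 := by
  rw [Matrix.det_add_eq_sum_det_rowPiecewise]
  refine sum_congr rfl fun α _ => ?_
  rw [Matrix.det_eq_sum_laplace_rows _ α]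
  refine sum_congr rfl fun β _ => ?_
  split_ifs with h
  · rw [Matrix.submatrix_rowPiecewise_of_notMem _ _ fun i => mem_compl.1 (coe_mem _),
      Matrix.submatrix_rowPiecewise_of_mem _ _ fun i => coe_mem _]
  · rfl
end
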